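/- (Local uncertainty principle for the Fourier transform.) Let Σ ⊂ ℝ^d be measurable with 0 < |Σ| < ∞. (i) If 0 < s < d/2, there is a constant C = C(s, d) > 0 such that for all f ∈ L²(ℝ^d): ( ∫_Σ |F f(ξ)|² dξ )^{1/2} ≤ C |Σ|^{s/d} ( ∫_{ℝ^d} |x|^{2s} |f(x)|² dx )^{1/2}. (ii) If s > d/2, there is a constant C = C(s, d) > 0 such that for all f ∈ L²(ℝ^d): ( ∫_Σ |F f(ξ)|² dξ )^{1/2} ≤ C |Σ|^{1/2} ( ∫_{ℝ^d} |f(x)|² dx )^{(1 − d/(2s))/2} ( ∫_{ℝ^d} |x|^{2s} |f(x)|² dx )^{d/(4s)}. -/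

import Mathlib

open MeasureTheory Metric Set
open scoped ENNReal NNReal

noncomputable section
namespace LUP
variable {d : ℕ}
local notation "E" => EuclideanSpace ℝ (Fin d)

lemma w_meas (t : ℝ) : Measurable fun x : E => (‖x‖₊ : ℝ≥0∞) ^ t :=
  measurable_nnnorm.coe_nnreal_ennreal.pow_const t

lemma lint_comp_smul (F : E → ℝ≥0∞) (hF : Measurable F) {r : ℝ} (hr : r ≠ 0) :
    ∫⁻ x, F (r • x) ∂volume = ENNReal.ofReal |(r ^ d : ℝ)⁻¹| * ∫⁻ x, F x ∂volume := by
  rw [← lintegral_map hF (measurable_const_smul r),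
    MeasureTheory.Measure.map_addHaar_smul volume hr, lintegral_smul_measure,
    finrank_euclideanSpace_fin, smul_eq_mul]

lemma tailset_meas (r : ℝ) : MeasurableSet {x : E | r ≤ ‖x‖} :=
  (isClosed_le continuous_const continuous_norm).measurableSet

lemma tail_scale {s : ℝ} {r : ℝ} (hr : 0 < r) :
    ∫⁻ x in {x : E | r ≤ ‖x‖}, (‖x‖₊ : ℝ≥0∞) ^ (-(2*s)) ∂volume
      = ENNReal.ofReal (r ^ ((d:ℝ) - 2*s)) *
        ∫⁻ x in {x : E | 1 ≤ ‖x‖}, (‖x‖₊ : ℝ≥0∞) ^ (-(2*s)) ∂volume := by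
  set w : E → ℝ≥0∞ := fun x => (‖x‖₊ : ℝ≥0∞) ^ (-(2*s)) with hw
  have hFm : Measurable ({x : E | r ≤ ‖x‖}.indicator w) :=
    (w_meas _).indicator (tailset_meas r)
  have key := lint_comp_smul ({x : E | r ≤ ‖x‖}.indicator w) hFm hr.ne'
  have hptw : ∀ x : E, {x : E | r ≤ ‖x‖}.indicator w (r • x)
      = {x : E | 1 ≤ ‖x‖}.indicator
          (fun x => ENNReal.ofReal r ^ (-(2*s)) * w x) x := by
    intro x
    have hnorm : ‖r • x‖ = r * ‖x‖ := by
      rw [norm_smul, Real.norm_eq_abs, abs_of_pos hr]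
    have hmem : (r • x) ∈ {x : E | r ≤ ‖x‖} ↔ x ∈ {x : E | 1 ≤ ‖x‖} := by
      simp only [Set.mem_setOf_eq, hnorm]
      exact le_mul_iff_one_le_right hr
    by_cases hx : x ∈ {x : E | 1 ≤ ‖x‖}
    · rw [Set.indicator_of_mem (hmem.mpr hx), Set.indicator_of_mem hx]
      have hx0 : (‖x‖₊ : ℝ≥0∞) ≠ 0 := by
        simp only [ne_eq, ENNReal.coe_eq_zero, nnnorm_eq_zero]
        intro h0
        rw [h0] at hx
        simp only [Set.mem_setOf_eq, norm_zero] at hx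
        linarith
      have hrn : (‖(r:ℝ)‖₊ : ℝ≥0∞) = ENNReal.ofReal r := by
        rw [← Real.enorm_eq_ofReal hr.le, enorm_eq_nnnorm]
      rw [hw]
      simp only []
      have : (‖r • x‖₊ : ℝ≥0∞) = (‖(r:ℝ)‖₊ : ℝ≥0∞) * (‖x‖₊ : ℝ≥0∞) := by
        rw [nnnorm_smul]; push_cast; ring
      rw [this, ENNReal.mul_rpow_of_ne_zero (by simp [hr.ne']) hx0, hrn]
    · rw [Set.indicator_of_notMem (fun h => hx (hmem.mp h)), Set.indicator_of_notMem hx]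
  rw [lintegral_congr hptw] at key
  rw [lintegral_indicator (tailset_meas 1) _, lintegral_const_mul _ (w_meas _),
    lintegral_indicator (tailset_meas r) _] at key
  have hcancel : ENNReal.ofReal (r ^ d) * ENNReal.ofReal |(r ^ d : ℝ)⁻¹| = 1 := by
    rw [abs_of_pos (by positivity), ← ENNReal.ofReal_mul (by positivity),
      mul_inv_cancel₀ (by positivity), ENNReal.ofReal_one]
  calc ∫⁻ x in {x : E | r ≤ ‖x‖}, w x
      = (ENNReal.ofReal (r ^ d) * ENNReal.ofReal |(r ^ d : ℝ)⁻¹|) *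
        ∫⁻ x in {x : E | r ≤ ‖x‖}, w x := by rw [hcancel, one_mul]
    _ = ENNReal.ofReal (r ^ d) * (ENNReal.ofReal |(r ^ d : ℝ)⁻¹| *
        ∫⁻ x in {x : E | r ≤ ‖x‖}, w x) := by rw [mul_assoc]
    _ = ENNReal.ofReal (r ^ d) * (ENNReal.ofReal r ^ (-(2*s)) *
        ∫⁻ x in {x : E | 1 ≤ ‖x‖}, w x) := by rw [← key]
    _ = (ENNReal.ofReal (r ^ d) * ENNReal.ofReal r ^ (-(2*s))) *
        ∫⁻ x in {x : E | 1 ≤ ‖x‖}, w x := by rw [mul_assoc]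
    _ = ENNReal.ofReal (r ^ ((d:ℝ) - 2*s)) * ∫⁻ x in {x : E | 1 ≤ ‖x‖}, w x := by
        congr 1
        rw [ENNReal.ofReal_pow hr.le, ← ENNReal.rpow_natCast (ENNReal.ofReal r) d,
          ← ENNReal.rpow_add _ _ (by simp [hr]) ENNReal.ofReal_ne_top,
          ENNReal.ofReal_rpow_of_pos hr]
        ring_nf

lemma nontriv (hd : 1 ≤ d) : Nontrivial E :=
  ⟨⟨0, EuclideanSpace.single ⟨0, hd⟩ 1, fun h => by
    have := congrArg (fun v : E => v (⟨0, hd⟩ : Fin d)) h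
    simp [EuclideanSpace.single_apply] at this⟩⟩

lemma layer (hd : 1 ≤ d) (U : Set E) (hU : MeasurableSet U) {s : ℝ} (hs : 0 < s) :
    ∫⁻ x in U, (‖x‖₊ : ℝ≥0∞) ^ (-(2*s)) ∂volume
      = ∫⁻ t in Set.Ioi (0:ℝ),
          volume {x : E | t ≤ U.indicator (fun x => ‖x‖ ^ (-(2*s)) : E → ℝ) x} := by
  haveI := nontriv hd
  have hae : ∀ᵐ x : E ∂(volume.restrict U), (‖x‖₊ : ℝ≥0∞) ^ (-(2*s))
      = ENNReal.ofReal (‖x‖ ^ (-(2*s))) := by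
    have h0 : ∀ᵐ x : E ∂volume, x ≠ 0 := by
      have : volume ({0} : Set E) = 0 := measure_singleton 0
      filter_upwards [measure_eq_zero_iff_ae_notMem.mp this] with x hx using hx
    filter_upwards [ae_restrict_of_ae h0] with x hx
    rw [← enorm_eq_nnnorm, ← ofReal_norm, ENNReal.ofReal_rpow_of_pos (norm_pos_iff.mpr hx)]
  rw [lintegral_congr_ae hae, ← lintegral_indicator hU]
  have hswap : ∀ x : E, U.indicator (fun x => ENNReal.ofReal (‖x‖ ^ (-(2*s)))) x
      = ENNReal.ofReal (U.indicator (fun x => ‖x‖ ^ (-(2*s)) : E → ℝ) x) := by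
    intro x
    by_cases hx : x ∈ U <;> simp [hx]
  rw [lintegral_congr hswap]
  refine lintegral_eq_lintegral_meas_le volume ?_ ?_
  · refine Filter.Eventually.of_forall fun x => ?_
    exact Set.indicator_nonneg (fun y _ => Real.rpow_nonneg (norm_nonneg y) _) x
  · exact ((measurable_norm.pow_const _).indicator hU).aemeasurable

lemma superlevel_subset (U : Set E) {s t : ℝ} (hs : 0 < s) (ht : 0 < t) :
    {x : E | t ≤ U.indicator (fun x => ‖x‖ ^ (-(2*s)) : E → ℝ) x}
      ⊆ U ∩ Metric.closedBall 0 (t ^ (-(2*s))⁻¹) := by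
  intro x hx
  simp only [Set.mem_setOf_eq] at hx
  have hxU : x ∈ U := by
    by_contra hc
    rw [Set.indicator_of_notMem hc] at hx
    linarith
  rw [Set.indicator_of_mem hxU] at hx
  refine ⟨hxU, ?_⟩
  rw [Metric.mem_closedBall, dist_zero_right]
  have h2s : (-(2*s)) ≠ 0 := ne_of_lt (by linarith)
  have hneg : (-(2*s))⁻¹ ≤ 0 := le_of_lt (inv_lt_zero.mpr (by linarith))
  have hle := Real.rpow_le_rpow_of_nonpos ht hx hneg
  calc ‖x‖ = (‖x‖ ^ (-(2*s))) ^ (-(2*s))⁻¹ := by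
        rw [← Real.rpow_mul (norm_nonneg x), mul_inv_cancel₀ h2s, Real.rpow_one]
    _ ≤ t ^ (-(2*s))⁻¹ := hle

lemma ball_finite (hd : 1 ≤ d) {s : ℝ} (hs : 0 < s) (hsd : 2*s < (d:ℝ)) :
    ∫⁻ x in Metric.ball (0 : E) 1, (‖x‖₊ : ℝ≥0∞) ^ (-(2*s)) ∂volume < ∞ := by
  rw [layer hd _ measurableSet_ball hs]
  set q : ℝ := (-(2*s))⁻¹ * d with hq
  have hq1 : q < -1 := by
    have h1 : q = -((d:ℝ) / (2*s)) := by rw [hq]; field_simp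
    rw [h1, neg_lt_neg_iff, lt_div_iff₀ (by positivity : (0:ℝ) < 2*s)]
    linarith
  calc ∫⁻ t in Set.Ioi (0:ℝ),
        volume {x : E | t ≤ (Metric.ball (0:E) 1).indicator (fun x => ‖x‖ ^ (-(2*s)) : E → ℝ) x}
      ≤ ∫⁻ t in Set.Ioc (0:ℝ) 1 ∪ Set.Ioi 1,
        volume {x : E | t ≤ (Metric.ball (0:E) 1).indicator (fun x => ‖x‖ ^ (-(2*s)) : E → ℝ) x} :=
        lintegral_mono_set Set.Ioi_subset_Ioc_union_Ioi
    _ ≤ (∫⁻ t in Set.Ioc (0:ℝ) 1,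
        volume {x : E | t ≤ (Metric.ball (0:E) 1).indicator (fun x => ‖x‖ ^ (-(2*s)) : E → ℝ) x})
        + ∫⁻ t in Set.Ioi (1:ℝ),
        volume {x : E | t ≤ (Metric.ball (0:E) 1).indicator (fun x => ‖x‖ ^ (-(2*s)) : E → ℝ) x} :=
        lintegral_union_le _ _ _
    _ < ∞ := by
        refine ENNReal.add_lt_top.2 ⟨?_, ?_⟩
        · calc (∫⁻ t in Set.Ioc (0:ℝ) 1, volume {x : E | t ≤ (Metric.ball (0:E) 1).indicator
                (fun x => ‖x‖ ^ (-(2*s)) : E → ℝ) x})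
              ≤ ∫⁻ _ in Set.Ioc (0:ℝ) 1, volume (Metric.ball (0:E) 1) := by
                refine setLIntegral_mono' measurableSet_Ioc fun t ht => ?_
                refine measure_mono ?_
                exact (superlevel_subset _ hs ht.1).trans Set.inter_subset_left
            _ < ∞ := by
                rw [setLIntegral_const]
                exact ENNReal.mul_lt_top measure_ball_lt_top
                  (by simp [Real.volume_Ioc])
        · calc (∫⁻ t in Set.Ioi (1:ℝ), volume {x : E | t ≤ (Metric.ball (0:E) 1).indicator
                (fun x => ‖x‖ ^ (-(2*s)) : E → ℝ) x})
              ≤ ∫⁻ t in Set.Ioi (1:ℝ),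
                  ENNReal.ofReal (t ^ q) * volume (Metric.ball (0:E) 1) := by
                refine setLIntegral_mono' measurableSet_Ioi fun t ht => ?_
                have ht0 : (0:ℝ) < t := lt_trans one_pos ht
                calc volume {x : E | t ≤ (Metric.ball (0:E) 1).indicator
                      (fun x => ‖x‖ ^ (-(2*s)) : E → ℝ) x}
                    ≤ volume (Metric.closedBall (0:E) (t ^ (-(2*s))⁻¹)) :=
                      measure_mono ((superlevel_subset _ hs ht0).trans Set.inter_subset_right)
                  _ = ENNReal.ofReal ((t ^ (-(2*s))⁻¹) ^ d) * volume (Metric.ball (0:E) 1) := by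
                      rw [Measure.addHaar_closedBall volume (0:E)
                        (Real.rpow_nonneg ht0.le _), finrank_euclideanSpace_fin]
                  _ = ENNReal.ofReal (t ^ q) * volume (Metric.ball (0:E) 1) := by
                      rw [← Real.rpow_natCast (t ^ (-(2*s))⁻¹) d, ← Real.rpow_mul ht0.le]
            _ = (∫⁻ t in Set.Ioi (1:ℝ), ENNReal.ofReal (t ^ q)) * volume (Metric.ball (0:E) 1) :=
                lintegral_mul_const' _ _ measure_ball_lt_top.ne
            _ < ∞ := ENNReal.mul_lt_top
                ((integrableOn_Ioi_rpow_of_lt hq1 one_pos).setLIntegral_lt_top)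
                measure_ball_lt_top

lemma tail_finite (hd : 1 ≤ d) {s : ℝ} (hs : 0 < s) (hsd : (d:ℝ) < 2*s) :
    ∫⁻ x in {x : E | 1 ≤ ‖x‖}, (‖x‖₊ : ℝ≥0∞) ^ (-(2*s)) ∂volume < ∞ := by
  rw [layer hd _ (tailset_meas 1) hs]
  set q : ℝ := (-(2*s))⁻¹ * d with hq
  have hq1 : (-1:ℝ) < q := by
    have h1 : q = -((d:ℝ) / (2*s)) := by rw [hq]; field_simp
    rw [h1, neg_lt_neg_iff, div_lt_iff₀ (by positivity : (0:ℝ) < 2*s)]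
    linarith
  calc ∫⁻ t in Set.Ioi (0:ℝ),
        volume {x : E | t ≤ ({x : E | 1 ≤ ‖x‖}).indicator (fun x => ‖x‖ ^ (-(2*s)) : E → ℝ) x}
      ≤ ∫⁻ t in Set.Ioc (0:ℝ) 1 ∪ Set.Ioi 1,
        volume {x : E | t ≤ ({x : E | 1 ≤ ‖x‖}).indicator (fun x => ‖x‖ ^ (-(2*s)) : E → ℝ) x} :=
        lintegral_mono_set Set.Ioi_subset_Ioc_union_Ioi
    _ ≤ (∫⁻ t in Set.Ioc (0:ℝ) 1,
        volume {x : E | t ≤ ({x : E | 1 ≤ ‖x‖}).indicator (fun x => ‖x‖ ^ (-(2*s)) : E → ℝ) x})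
        + ∫⁻ t in Set.Ioi (1:ℝ),
        volume {x : E | t ≤ ({x : E | 1 ≤ ‖x‖}).indicator (fun x => ‖x‖ ^ (-(2*s)) : E → ℝ) x} :=
        lintegral_union_le _ _ _
    _ < ∞ := by
        refine ENNReal.add_lt_top.2 ⟨?_, ?_⟩
        · calc (∫⁻ t in Set.Ioc (0:ℝ) 1, volume {x : E | t ≤ ({x : E | 1 ≤ ‖x‖}).indicator
                (fun x => ‖x‖ ^ (-(2*s)) : E → ℝ) x})
              ≤ ∫⁻ t in Set.Ioc (0:ℝ) 1, ENNReal.ofReal (t ^ q) * volume (Metric.ball (0:E) 1) := by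
                refine setLIntegral_mono' measurableSet_Ioc fun t ht => ?_
                have ht0 : (0:ℝ) < t := ht.1
                calc volume {x : E | t ≤ ({x : E | 1 ≤ ‖x‖}).indicator
                      (fun x => ‖x‖ ^ (-(2*s)) : E → ℝ) x}
                    ≤ volume (Metric.closedBall (0:E) (t ^ (-(2*s))⁻¹)) :=
                      measure_mono ((superlevel_subset _ hs ht0).trans Set.inter_subset_right)
                  _ = ENNReal.ofReal ((t ^ (-(2*s))⁻¹) ^ d) * volume (Metric.ball (0:E) 1) := by
                      rw [Measure.addHaar_closedBall volume (0:E)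
                        (Real.rpow_nonneg ht0.le _), finrank_euclideanSpace_fin]
                  _ = ENNReal.ofReal (t ^ q) * volume (Metric.ball (0:E) 1) := by
                      rw [← Real.rpow_natCast (t ^ (-(2*s))⁻¹) d, ← Real.rpow_mul ht0.le]
            _ = (∫⁻ t in Set.Ioc (0:ℝ) 1, ENNReal.ofReal (t ^ q)) * volume (Metric.ball (0:E) 1) :=
                lintegral_mul_const' _ _ measure_ball_lt_top.ne
            _ < ∞ := by
                refine ENNReal.mul_lt_top ?_ measure_ball_lt_top
                refine IntegrableOn.setLIntegral_lt_top ?_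
                rw [← intervalIntegrable_iff_integrableOn_Ioc_of_le zero_le_one]
                exact intervalIntegral.intervalIntegrable_rpow' hq1
        · have hzero : ∀ t ∈ Set.Ioi (1:ℝ),
              volume {x : E | t ≤ ({x : E | 1 ≤ ‖x‖}).indicator
                (fun x => ‖x‖ ^ (-(2*s)) : E → ℝ) x} = 0 := by
            intro t ht
            have : {x : E | t ≤ ({x : E | 1 ≤ ‖x‖}).indicator
                (fun x => ‖x‖ ^ (-(2*s)) : E → ℝ) x} = ∅ := by
              rw [Set.eq_empty_iff_forall_notMem]
              intro x hx
              simp only [Set.mem_setOf_eq] at hx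
              by_cases hxU : x ∈ {x : E | 1 ≤ ‖x‖}
              · rw [Set.indicator_of_mem hxU] at hx
                have : ‖x‖ ^ (-(2*s)) ≤ 1 :=
                  Real.rpow_le_one_of_one_le_of_nonpos hxU (by linarith)
                linarith [Set.mem_Ioi.mp ht]
              · rw [Set.indicator_of_notMem hxU] at hx
                linarith [Set.mem_Ioi.mp ht]
            rw [this, measure_empty]
          rw [setLIntegral_congr_fun measurableSet_Ioi hzero]
          simp

lemma cs (μ : Measure E) (a b : E → ℝ≥0∞) (ha : AEMeasurable a μ) (hb : AEMeasurable b μ) :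
    ∫⁻ x, a x * b x ∂μ ≤
      (∫⁻ x, a x ^ (2:ℝ) ∂μ) ^ ((1:ℝ)/2) * (∫⁻ x, b x ^ (2:ℝ) ∂μ) ^ ((1:ℝ)/2) :=
  ENNReal.lintegral_mul_le_Lp_mul_Lq μ (by constructor <;> norm_num) ha hb

lemma rpow_two_eq (x : ℝ≥0∞) : x ^ (2:ℝ) = x ^ (2:ℕ) := by
  rw [show (2:ℝ) = ((2:ℕ):ℝ) by norm_num, ENNReal.rpow_natCast]

lemma weighted_L1 (hd : 1 ≤ d) {s : ℝ} (hs : 0 < s) (U : Set E) (hU : MeasurableSet U)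
    (f : E → ℂ) (hf : AEMeasurable f volume) :
    ∫⁻ x in U, (‖f x‖₊ : ℝ≥0∞) ∂volume
      ≤ (∫⁻ x in U, (‖x‖₊ : ℝ≥0∞) ^ (-(2*s)) ∂volume) ^ ((1:ℝ)/2) *
        (∫⁻ x, (‖x‖₊ : ℝ≥0∞) ^ (2*s) * (‖f x‖₊ : ℝ≥0∞) ^ 2 ∂volume) ^ ((1:ℝ)/2) := by
  haveI := nontriv hd
  have h0 : ∀ᵐ x : E ∂(volume.restrict U), x ≠ 0 := by
    have hz : volume ({0} : Set E) = 0 := measure_singleton 0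
    exact ae_restrict_of_ae (by filter_upwards [measure_eq_zero_iff_ae_notMem.mp hz] with x hx using hx)
  have heq : ∀ᵐ x : E ∂(volume.restrict U), (‖f x‖₊ : ℝ≥0∞)
      = (‖x‖₊ : ℝ≥0∞) ^ (-s) * ((‖x‖₊ : ℝ≥0∞) ^ s * (‖f x‖₊ : ℝ≥0∞)) := by
    filter_upwards [h0] with x hx
    have hx0 : (‖x‖₊ : ℝ≥0∞) ≠ 0 := by
      simp only [ne_eq, ENNReal.coe_eq_zero, nnnorm_eq_zero]; exact hx
    rw [← mul_assoc, ← ENNReal.rpow_add _ _ hx0 ENNReal.coe_ne_top]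
    simp
  rw [lintegral_congr_ae heq]
  refine le_trans (cs _ _ _ ((w_meas (-s)).aemeasurable)
    (((w_meas s).aemeasurable.mul (hf.nnnorm.coe_nnreal_ennreal)).restrict)) ?_
  refine mul_le_mul' (ENNReal.rpow_le_rpow ?_ (by norm_num))
    (ENNReal.rpow_le_rpow ?_ (by norm_num))
  · refine le_of_eq (lintegral_congr fun x => ?_)
    rw [← ENNReal.rpow_mul]
    norm_num
    rw [mul_comm]
  · refine le_trans (le_of_eq (lintegral_congr fun x => ?_)) (setLIntegral_le_lintegral _ _)
    rw [ENNReal.mul_rpow_of_nonneg _ _ (by norm_num : (0:ℝ) ≤ 2), ← ENNReal.rpow_mul,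
      rpow_two_eq]
    norm_num
    rw [mul_comm s 2]

lemma plain_L1 (U : Set E) (f : E → ℂ) (hf : AEMeasurable f volume) :
    ∫⁻ x in U, (‖f x‖₊ : ℝ≥0∞) ∂volume
      ≤ (volume U) ^ ((1:ℝ)/2) * (∫⁻ x, (‖f x‖₊ : ℝ≥0∞) ^ 2 ∂volume) ^ ((1:ℝ)/2) := by
  have h1 : ∫⁻ x in U, (‖f x‖₊ : ℝ≥0∞) ∂volume
      = ∫⁻ x in U, (1 : ℝ≥0∞) * (‖f x‖₊ : ℝ≥0∞) ∂volume := by simp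
  rw [h1]
  refine le_trans (cs _ _ _ aemeasurable_const (hf.nnnorm.coe_nnreal_ennreal.restrict)) ?_
  refine mul_le_mul' (ENNReal.rpow_le_rpow ?_ (by norm_num))
    (ENNReal.rpow_le_rpow ?_ (by norm_num))
  · refine le_of_eq ?_
    simp [ENNReal.one_rpow, setLIntegral_one]
  · refine le_trans (le_of_eq (lintegral_congr fun x => by rw [rpow_two_eq]))
      (setLIntegral_le_lintegral _ _)

end LUP

theorem stmt_19
    (d : ℕ) (hd : 1 ≤ d)
    (Fr : (EuclideanSpace ℝ (Fin d) → ℂ) → EuclideanSpace ℝ (Fin d) → ℂ)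
    (hFrdef : ∀ f : EuclideanSpace ℝ (Fin d) → ℂ, Integrable f volume → ∀ ξ,
      Fr f ξ = (((2 * Real.pi) ^ (-(d : ℝ) / 2) : ℝ) : ℂ) *
        ∫ x, f x * Complex.exp (-(Complex.I * ((inner ℝ x ξ : ℝ) : ℂ))) ∂volume)
    (hFrmeas : ∀ f : EuclideanSpace ℝ (Fin d) → ℂ, MemLp f 2 volume → AEStronglyMeasurable (Fr f) volume)
    (hFradd : ∀ f g : EuclideanSpace ℝ (Fin d) → ℂ, MemLp f 2 volume → MemLp g 2 volume →
      Fr (f + g) =ᵐ[volume] Fr f + Fr g)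
    (hFrsmul : ∀ (c : ℂ) (f : EuclideanSpace ℝ (Fin d) → ℂ), MemLp f 2 volume → Fr (c • f) =ᵐ[volume] c • Fr f)
    (hFrplan : ∀ f : EuclideanSpace ℝ (Fin d) → ℂ, MemLp f 2 volume →
      ∫⁻ ξ, (‖Fr f ξ‖₊ : ℝ≥0∞) ^ 2 ∂volume = ∫⁻ x, (‖f x‖₊ : ℝ≥0∞) ^ 2 ∂volume)
    (hFrsurj : ∀ g : EuclideanSpace ℝ (Fin d) → ℂ, MemLp g 2 volume →
      ∃ f : EuclideanSpace ℝ (Fin d) → ℂ, MemLp f 2 volume ∧ Fr f =ᵐ[volume] g)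
    (Sh : Set (EuclideanSpace ℝ (Fin d))) (hShmeas : MeasurableSet Sh)
    (hSh0 : 0 < volume Sh) (hShfin : volume Sh < ⊤) :
    (∀ s : ℝ, 0 < s → s < d / 2 →
      ∃ C : ℝ, 0 < C ∧ ∀ f : EuclideanSpace ℝ (Fin d) → ℂ, MemLp f 2 volume →
        (∫⁻ ξ in Sh, (‖Fr f ξ‖₊ : ℝ≥0∞) ^ 2 ∂volume) ^ ((1 : ℝ) / 2) ≤
          ENNReal.ofReal C * (volume Sh) ^ (s / d) *
            (∫⁻ x, (‖x‖₊ : ℝ≥0∞) ^ (2 * s) * (‖f x‖₊ : ℝ≥0∞) ^ 2 ∂volume) ^ ((1 : ℝ) / 2)) ∧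
    (∀ s : ℝ, (d : ℝ) / 2 < s →
      ∃ C : ℝ, 0 < C ∧ ∀ f : EuclideanSpace ℝ (Fin d) → ℂ, MemLp f 2 volume →
        (∫⁻ ξ in Sh, (‖Fr f ξ‖₊ : ℝ≥0∞) ^ 2 ∂volume) ^ ((1 : ℝ) / 2) ≤
          ENNReal.ofReal C * (volume Sh) ^ ((1 : ℝ) / 2) *
            (∫⁻ x, (‖f x‖₊ : ℝ≥0∞) ^ 2 ∂volume) ^ ((1 - (d : ℝ) / (2 * s)) / 2) *
            (∫⁻ x, (‖x‖₊ : ℝ≥0∞) ^ (2 * s) * (‖f x‖₊ : ℝ≥0∞) ^ 2 ∂volume) ^ ((d : ℝ) / (4 * s))) := by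
  classical
  have hc₀pos : (0:ℝ) < (2 * Real.pi) ^ (-(d : ℝ) / 2) := Real.rpow_pos_of_pos (by positivity) _
  set c₀ : ℝ := (2 * Real.pi) ^ (-(d : ℝ) / 2) with hc₀def
  -- pointwise bound on the Fourier transform of an integrable function
  have key : ∀ g : EuclideanSpace ℝ (Fin d) → ℂ, Integrable g volume → ∀ ξ,
      (‖Fr g ξ‖₊ : ℝ≥0∞) ≤ ENNReal.ofReal c₀ * ∫⁻ x, (‖g x‖₊ : ℝ≥0∞) ∂volume := by
    intro g hg ξ
    rw [hFrdef g hg ξ]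
    have hexp : ∀ x : EuclideanSpace ℝ (Fin d),
        ‖g x * Complex.exp (-(Complex.I * ((inner ℝ x ξ : ℝ) : ℂ)))‖ = ‖g x‖ := by
      intro x
      rw [norm_mul, Complex.norm_exp]
      simp [Complex.mul_re]
    have hnorm : ‖((c₀ : ℝ) : ℂ) *
        ∫ x, g x * Complex.exp (-(Complex.I * ((inner ℝ x ξ : ℝ) : ℂ))) ∂volume‖
        ≤ c₀ * ∫ x, ‖g x‖ ∂volume := by
      rw [norm_mul, Complex.norm_real, Real.norm_eq_abs, abs_of_pos hc₀pos]
      refine mul_le_mul_of_nonneg_left ?_ hc₀pos.le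
      refine le_trans (norm_integral_le_integral_norm _) (le_of_eq ?_)
      simp only [hexp]
    calc (‖((c₀ : ℝ) : ℂ) *
          ∫ x, g x * Complex.exp (-(Complex.I * ((inner ℝ x ξ : ℝ) : ℂ))) ∂volume‖₊ : ℝ≥0∞)
        = ENNReal.ofReal ‖((c₀ : ℝ) : ℂ) *
          ∫ x, g x * Complex.exp (-(Complex.I * ((inner ℝ x ξ : ℝ) : ℂ))) ∂volume‖ :=
          (ofReal_norm _).symm
      _ ≤ ENNReal.ofReal (c₀ * ∫ x, ‖g x‖ ∂volume) := ENNReal.ofReal_le_ofReal hnorm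
      _ = ENNReal.ofReal c₀ * ENNReal.ofReal (∫ x, ‖g x‖ ∂volume) :=
          ENNReal.ofReal_mul hc₀pos.le
      _ = ENNReal.ofReal c₀ * ∫⁻ x, (‖g x‖₊ : ℝ≥0∞) ∂volume := by
          exact congrArg _ (MeasureTheory.ofReal_integral_norm_eq_lintegral_enorm hg)
  have supsq : ∀ (g : EuclideanSpace ℝ (Fin d) → ℂ) (K : ℝ≥0∞),
      (∀ ξ, (‖Fr g ξ‖₊ : ℝ≥0∞) ≤ K) →
      (∫⁻ ξ in Sh, (‖Fr g ξ‖₊ : ℝ≥0∞) ^ 2 ∂volume) ≤ K ^ 2 * volume Sh := by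
    intro g K hK
    calc ∫⁻ ξ in Sh, (‖Fr g ξ‖₊ : ℝ≥0∞) ^ 2 ∂volume
        ≤ ∫⁻ _ in Sh, K ^ 2 ∂volume :=
          lintegral_mono fun ξ => pow_le_pow_left₀ zero_le (hK ξ) 2
      _ = K ^ 2 * volume Sh := setLIntegral_const _ _
  have sqrt_bound : ∀ (g : EuclideanSpace ℝ (Fin d) → ℂ) (K : ℝ≥0∞),
      (∀ ξ, (‖Fr g ξ‖₊ : ℝ≥0∞) ≤ K) →
      (∫⁻ ξ in Sh, (‖Fr g ξ‖₊ : ℝ≥0∞) ^ 2 ∂volume) ^ ((1:ℝ)/2)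
        ≤ K * (volume Sh) ^ ((1:ℝ)/2) := by
    intro g K hK
    calc (∫⁻ ξ in Sh, (‖Fr g ξ‖₊ : ℝ≥0∞) ^ 2 ∂volume) ^ ((1:ℝ)/2)
        ≤ (K ^ 2 * volume Sh) ^ ((1:ℝ)/2) :=
          ENNReal.rpow_le_rpow (supsq g K hK) (by norm_num)
      _ = K * (volume Sh) ^ ((1:ℝ)/2) := by
          rw [← LUP.rpow_two_eq, ENNReal.mul_rpow_of_nonneg _ _ (by norm_num : (0:ℝ) ≤ 1/2),
            ← ENNReal.rpow_mul]
          norm_num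
  constructor
  · -- Part (i)
    intro s hs hsd
    have hd0 : (0:ℝ) < d := by exact_mod_cast hd
    have hsd' : 2 * s < (d:ℝ) := by
      have : s < (d:ℝ) / 2 := by exact_mod_cast hsd
      linarith
    have hCb := LUP.ball_finite hd hs hsd'
    set Cb := ∫⁻ x in Metric.ball (0 : EuclideanSpace ℝ (Fin d)) 1,
      (‖x‖₊ : ℝ≥0∞) ^ (-(2*s)) ∂volume with hCbdef
    set D : ℝ≥0∞ := ENNReal.ofReal c₀ * Cb ^ ((1:ℝ)/2) * (volume Sh) ^ ((1:ℝ)/2) + 1 with hDdef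
    have hD_top : D ≠ ∞ := by
      rw [hDdef]
      refine ENNReal.add_ne_top.mpr ⟨?_, ENNReal.one_ne_top⟩
      exact ENNReal.mul_ne_top (ENNReal.mul_ne_top ENNReal.ofReal_ne_top
        (ENNReal.rpow_ne_top_of_nonneg (by norm_num) hCb.ne))
        (ENNReal.rpow_ne_top_of_nonneg (by norm_num) hShfin.ne)
    set P : ℝ≥0∞ := (volume Sh) ^ (s / (d:ℝ)) with hPdef
    have hP0 : P ≠ 0 := by
      rw [hPdef]; exact (ENNReal.rpow_pos hSh0 hShfin.ne).ne'
    have hP_top : P ≠ ∞ := by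
      rw [hPdef]; exact ENNReal.rpow_ne_top_of_nonneg (by positivity) hShfin.ne
    have hCpos : (0:ℝ) < (D / P).toReal + 1 := by positivity
    refine ⟨(D / P).toReal + 1, hCpos, ?_⟩
    intro f hf
    set M := ∫⁻ x, (‖x‖₊ : ℝ≥0∞) ^ (2*s) * (‖f x‖₊ : ℝ≥0∞) ^ 2 ∂volume with hMdef
    have hCle : D ≤ ENNReal.ofReal ((D / P).toReal + 1) * P := by
      have hfin : D / P ≠ ∞ := (ENNReal.div_lt_top hD_top hP0).ne
      have h1 : D / P ≤ ENNReal.ofReal ((D / P).toReal + 1) := by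
        calc D / P = ENNReal.ofReal ((D / P).toReal) := (ENNReal.ofReal_toReal hfin).symm
          _ ≤ _ := ENNReal.ofReal_le_ofReal (by linarith [ENNReal.toReal_nonneg (a := D / P)])
      calc D = D / P * P := (ENNReal.div_mul_cancel hP0 hP_top).symm
        _ ≤ _ := mul_le_mul_left h1 P
    by_cases hMtop : M = ∞
    · have hrhs : ENNReal.ofReal ((D / P).toReal + 1) * P * M ^ ((1:ℝ)/2) = ∞ := by
        rw [hMtop, ENNReal.top_rpow_of_pos (by norm_num : (0:ℝ) < 1/2), ENNReal.mul_top]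
        exact mul_ne_zero (ENNReal.ofReal_pos.mpr hCpos).ne' hP0
      exact hrhs ▸ le_top
    · set B := Metric.ball (0 : EuclideanSpace ℝ (Fin d)) 1 with hBdef
      set g := B.indicator f with hgdef
      set h := Bᶜ.indicator f with hhdef
      have hgh : g + h = f := Set.indicator_self_add_compl B f
      have hgL2 : MemLp g 2 volume := hf.indicator measurableSet_ball
      have hhL2 : MemLp h 2 volume := hf.indicator measurableSet_ball.compl
      have hgL1 : ∫⁻ x, (‖g x‖₊ : ℝ≥0∞) ∂volume ≤ Cb ^ ((1:ℝ)/2) * M ^ ((1:ℝ)/2) := by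
        have h1 : ∫⁻ x, (‖g x‖₊ : ℝ≥0∞) ∂volume = ∫⁻ x in B, (‖f x‖₊ : ℝ≥0∞) ∂volume := by
          rw [← lintegral_indicator measurableSet_ball]
          exact lintegral_congr fun x => by by_cases hx : x ∈ B <;> simp [hgdef, hx, ← hBdef]
        rw [h1, hCbdef, hMdef]
        exact LUP.weighted_L1 hd hs B measurableSet_ball f hf.1.aemeasurable
      have hgInt : Integrable g volume := by
        refine ⟨hgL2.1, ?_⟩
        refine lt_of_le_of_lt hgL1 (ENNReal.mul_lt_top ?_ ?_)
        · exact ENNReal.rpow_lt_top_of_nonneg (by norm_num) hCb.ne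
        · exact ENNReal.rpow_lt_top_of_nonneg (by norm_num) hMtop
      have hterm1 : (∫⁻ ξ in Sh, (‖Fr g ξ‖₊ : ℝ≥0∞) ^ 2 ∂volume) ^ ((1:ℝ)/2)
          ≤ ENNReal.ofReal c₀ * (Cb ^ ((1:ℝ)/2) * M ^ ((1:ℝ)/2)) * (volume Sh) ^ ((1:ℝ)/2) := by
        refine sqrt_bound g _ fun ξ => le_trans (key g hgInt ξ) ?_
        exact mul_le_mul_right hgL1 _
      have hterm2 : (∫⁻ ξ in Sh, (‖Fr h ξ‖₊ : ℝ≥0∞) ^ 2 ∂volume) ^ ((1:ℝ)/2) ≤ M ^ ((1:ℝ)/2) := by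
        refine ENNReal.rpow_le_rpow ?_ (by norm_num)
        calc ∫⁻ ξ in Sh, (‖Fr h ξ‖₊ : ℝ≥0∞) ^ 2 ∂volume
            ≤ ∫⁻ ξ, (‖Fr h ξ‖₊ : ℝ≥0∞) ^ 2 ∂volume := setLIntegral_le_lintegral _ _
          _ = ∫⁻ x, (‖h x‖₊ : ℝ≥0∞) ^ 2 ∂volume := hFrplan h hhL2
          _ = ∫⁻ x in Bᶜ, (‖f x‖₊ : ℝ≥0∞) ^ 2 ∂volume := by
              rw [← lintegral_indicator measurableSet_ball.compl]
              exact lintegral_congr fun x => by by_cases hx : x ∈ Bᶜ <;> simp [hhdef, hx, ← hBdef]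
          _ ≤ ∫⁻ x in Bᶜ, (‖x‖₊ : ℝ≥0∞) ^ (2*s) * (‖f x‖₊ : ℝ≥0∞) ^ 2 ∂volume := by
              refine setLIntegral_mono' measurableSet_ball.compl fun x hx => ?_
              conv_lhs => rw [← one_mul ((‖f x‖₊ : ℝ≥0∞) ^ 2)]
              refine mul_le_mul_left ?_ _
              have hx1 : (1:ℝ) ≤ ‖x‖ := by
                simpa [hBdef, Metric.mem_ball, dist_zero_right, not_lt] using hx
              calc (1:ℝ≥0∞) = 1 ^ (2*s) := (ENNReal.one_rpow _).symm
                _ ≤ (‖x‖₊ : ℝ≥0∞) ^ (2*s) := by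
                    refine ENNReal.rpow_le_rpow ?_ (by linarith)
                    rw [show ((1:ℝ≥0∞)) = ((1:ℝ≥0) : ℝ≥0∞) by simp, ENNReal.coe_le_coe]
                    rwa [← NNReal.coe_le_coe, coe_nnnorm, NNReal.coe_one]
          _ ≤ M := by rw [hMdef]; exact setLIntegral_le_lintegral _ _
      have hmink : (∫⁻ ξ in Sh, (‖Fr f ξ‖₊ : ℝ≥0∞) ^ 2 ∂volume) ^ ((1:ℝ)/2) ≤
          (∫⁻ ξ in Sh, (‖Fr g ξ‖₊ : ℝ≥0∞) ^ 2 ∂volume) ^ ((1:ℝ)/2) +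
          (∫⁻ ξ in Sh, (‖Fr h ξ‖₊ : ℝ≥0∞) ^ 2 ∂volume) ^ ((1:ℝ)/2) := by
        have hae : Fr f =ᵐ[volume] Fr g + Fr h := by
          rw [← hgh]; exact hFradd g h hgL2 hhL2
        have h1 : ∫⁻ ξ in Sh, (‖Fr f ξ‖₊ : ℝ≥0∞) ^ 2 ∂volume
            = ∫⁻ ξ in Sh, (‖(Fr g + Fr h) ξ‖₊ : ℝ≥0∞) ^ 2 ∂volume := by
          refine lintegral_congr_ae ?_
          filter_upwards [ae_restrict_of_ae hae] with ξ hξ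
          rw [hξ]
        rw [h1]
        simp only [← LUP.rpow_two_eq]
        refine le_trans (ENNReal.rpow_le_rpow (lintegral_mono fun ξ => ?_) (by norm_num))
          (ENNReal.lintegral_Lp_add_le ((hFrmeas g hgL2).enorm.restrict)
            ((hFrmeas h hhL2).enorm.restrict) one_le_two)
        refine ENNReal.rpow_le_rpow ?_ (by norm_num)
        calc (‖(Fr g + Fr h) ξ‖₊ : ℝ≥0∞)
            ≤ ((‖Fr g ξ‖₊ + ‖Fr h ξ‖₊ : ℝ≥0) : ℝ≥0∞) :=
              ENNReal.coe_le_coe.mpr (nnnorm_add_le _ _)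
          _ = (‖Fr g ξ‖₊ : ℝ≥0∞) + (‖Fr h ξ‖₊ : ℝ≥0∞) := by push_cast; ring
      calc (∫⁻ ξ in Sh, (‖Fr f ξ‖₊ : ℝ≥0∞) ^ 2 ∂volume) ^ ((1:ℝ)/2)
          ≤ (∫⁻ ξ in Sh, (‖Fr g ξ‖₊ : ℝ≥0∞) ^ 2 ∂volume) ^ ((1:ℝ)/2) +
            (∫⁻ ξ in Sh, (‖Fr h ξ‖₊ : ℝ≥0∞) ^ 2 ∂volume) ^ ((1:ℝ)/2) := hmink
        _ ≤ ENNReal.ofReal c₀ * (Cb ^ ((1:ℝ)/2) * M ^ ((1:ℝ)/2)) * (volume Sh) ^ ((1:ℝ)/2)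
            + M ^ ((1:ℝ)/2) := add_le_add hterm1 hterm2
        _ = D * M ^ ((1:ℝ)/2) := by
            rw [hDdef, add_mul, one_mul]
            congr 1
            ring
        _ ≤ ENNReal.ofReal ((D / P).toReal + 1) * P * M ^ ((1:ℝ)/2) :=
            mul_le_mul_left hCle _
  · -- Part (ii)
    intro s hsd
    haveI := LUP.nontriv hd
    have hd0 : (0:ℝ) < d := by exact_mod_cast hd
    have hs : 0 < s := by linarith
    have hs0 : s ≠ 0 := hs.ne'
    have hsd' : (d:ℝ) < 2*s := by linarith
    have hCt := LUP.tail_finite hd hs hsd'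
    set Ct := ∫⁻ x in {x : EuclideanSpace ℝ (Fin d) | 1 ≤ ‖x‖},
      (‖x‖₊ : ℝ≥0∞) ^ (-(2*s)) ∂volume with hCtdef
    set vB := volume (Metric.ball (0 : EuclideanSpace ℝ (Fin d)) 1) with hvBdef
    set D : ℝ≥0∞ := ENNReal.ofReal c₀ * (Ct ^ ((1:ℝ)/2) + vB ^ ((1:ℝ)/2)) + 1 with hDdef
    have hD_top : D ≠ ∞ := by
      rw [hDdef]
      refine ENNReal.add_ne_top.mpr ⟨?_, ENNReal.one_ne_top⟩
      refine ENNReal.mul_ne_top ENNReal.ofReal_ne_top ?_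
      refine ENNReal.add_ne_top.mpr ⟨?_, ?_⟩
      · exact ENNReal.rpow_ne_top_of_nonneg (by norm_num) hCt.ne
      · exact ENNReal.rpow_ne_top_of_nonneg (by norm_num) measure_ball_lt_top.ne
    have hCpos : (0:ℝ) < D.toReal + 1 := by positivity
    refine ⟨D.toReal + 1, hCpos, ?_⟩
    intro f hf
    set N := ∫⁻ x, (‖f x‖₊ : ℝ≥0∞) ^ 2 ∂volume with hNdef
    set M := ∫⁻ x, (‖x‖₊ : ℝ≥0∞) ^ (2*s) * (‖f x‖₊ : ℝ≥0∞) ^ 2 ∂volume with hMdef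
    have hN_top : N ≠ ∞ := by
      intro hNtop
      have h2 := hf.2
      rw [eLpNorm_eq_lintegral_rpow_enorm_toReal (by norm_num) (by norm_num)] at h2
      have heq : ∫⁻ x, ‖f x‖ₑ ^ ((2:ℝ≥0∞).toReal) ∂volume = N := by
        rw [hNdef]
        refine lintegral_congr fun x => ?_
        rw [enorm_eq_nnnorm, ENNReal.toReal_ofNat, LUP.rpow_two_eq]
      rw [heq, hNtop] at h2
      simp [ENNReal.top_rpow_of_pos] at h2
    by_cases hN0 : N = 0
    · have hFr0 : ∫⁻ ξ, (‖Fr f ξ‖₊ : ℝ≥0∞) ^ 2 ∂volume = 0 := by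
        rw [hFrplan f hf, ← hNdef]; exact hN0
      have hzero : ∫⁻ ξ in Sh, (‖Fr f ξ‖₊ : ℝ≥0∞) ^ 2 ∂volume = 0 :=
        le_antisymm (le_trans (setLIntegral_le_lintegral _ _) hFr0.le) zero_le
      rw [hzero, ENNReal.zero_rpow_of_pos (by norm_num : (0:ℝ) < 1/2)]
      exact zero_le
    have hαpos : (0:ℝ) < (1 - (d:ℝ)/(2*s))/2 := by
      have : (d:ℝ)/(2*s) < 1 := by
        rw [div_lt_one (by positivity)]; linarith
      linarith
    have hβpos : (0:ℝ) < (d:ℝ)/(4*s) := by positivity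
    by_cases hM0 : M = 0
    · exfalso
      apply hN0
      haveI := LUP.nontriv hd
      have hz : volume ({0} : Set (EuclideanSpace ℝ (Fin d))) = 0 := measure_singleton 0
      have hne : ∀ᵐ x : EuclideanSpace ℝ (Fin d) ∂volume, x ≠ 0 := by
        filter_upwards [measure_eq_zero_iff_ae_notMem.mp hz] with x hx using hx
      have hae0 : (fun x => (‖x‖₊ : ℝ≥0∞) ^ (2*s) * (‖f x‖₊ : ℝ≥0∞) ^ 2) =ᵐ[volume] 0 := by
        refine (lintegral_eq_zero_iff' ?_).mp hM0
        exact (LUP.w_meas (2*s)).aemeasurable.mul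
          (hf.1.aemeasurable.nnnorm.coe_nnreal_ennreal.pow_const 2)
      have hf0 : (fun x => (‖f x‖₊ : ℝ≥0∞) ^ 2) =ᵐ[volume] 0 := by
        filter_upwards [hae0, hne] with x h1 h2
        have hx0 : (‖x‖₊ : ℝ≥0∞) ^ (2*s) ≠ 0 := by
          refine (ENNReal.rpow_pos ?_ ENNReal.coe_ne_top).ne'
          simpa [pos_iff_ne_zero] using fun h => h2 (by simpa [nnnorm_eq_zero] using h)
        simp only [Pi.zero_apply] at h1 ⊢
        rcases mul_eq_zero.mp h1 with h | h
        · exact absurd h hx0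
        · exact h
      rw [hNdef, lintegral_congr_ae hf0]; simp
    by_cases hMtop : M = ∞
    · rw [hMtop, ENNReal.top_rpow_of_pos hβpos, ENNReal.mul_top]
      · exact le_top
      · refine mul_ne_zero (mul_ne_zero (ENNReal.ofReal_pos.mpr hCpos).ne' ?_) ?_
        · exact (ENNReal.rpow_pos hSh0 hShfin.ne).ne'
        · exact (ENNReal.rpow_pos (pos_iff_ne_zero.mpr hN0) hN_top).ne'
    -- main case
    have hMN0 : M / N ≠ 0 := by
      simp only [ne_eq, ENNReal.div_eq_zero_iff, not_or]
      exact ⟨hM0, hN_top⟩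
    have hMN_top : M / N ≠ ∞ := (ENNReal.div_lt_top hMtop hN0).ne
    set ρ : ℝ := (M / N).toReal ^ ((1:ℝ)/(2*s)) with hρdef
    have hρpos : 0 < ρ := Real.rpow_pos_of_pos (ENNReal.toReal_pos hMN0 hMN_top) _
    have hQ : ENNReal.ofReal ρ = (M / N) ^ ((1:ℝ)/(2*s)) := by
      rw [hρdef, ← ENNReal.ofReal_rpow_of_pos (ENNReal.toReal_pos hMN0 hMN_top),
        ENNReal.ofReal_toReal hMN_top]
    have qpow : ∀ e : ℝ, (ENNReal.ofReal ρ) ^ e = M ^ (e/(2*s)) * N ^ (-(e/(2*s))) := by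
      intro e
      rw [hQ, ← ENNReal.rpow_mul, div_eq_mul_inv M N,
        ENNReal.mul_rpow_of_ne_top hMtop (ENNReal.inv_ne_top.mpr hN0),
        ENNReal.inv_rpow, ← ENNReal.rpow_neg]
      congr 1
      · field_simp
        try ring
        try exact Or.inl trivial
      · field_simp
        try ring
        try exact Or.inl trivial
    set U := {x : EuclideanSpace ℝ (Fin d) | ρ ≤ ‖x‖} with hUdef
    have hUmeas : MeasurableSet U := LUP.tailset_meas ρ
    have hUc : Uᶜ = Metric.ball (0 : EuclideanSpace ℝ (Fin d)) ρ := by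
      ext x
      simp [hUdef, Metric.mem_ball, dist_zero_right, not_le]
    have htail : ∫⁻ x in U, (‖f x‖₊ : ℝ≥0∞) ∂volume
        ≤ (ENNReal.ofReal (ρ ^ ((d:ℝ) - 2*s)) * Ct) ^ ((1:ℝ)/2) * M ^ ((1:ℝ)/2) := by
      refine le_trans (LUP.weighted_L1 hd hs U hUmeas f hf.1.aemeasurable) ?_
      rw [hUdef, LUP.tail_scale hρpos, ← hCtdef, ← hMdef]
    have hball : ∫⁻ x in Uᶜ, (‖f x‖₊ : ℝ≥0∞) ∂volume
        ≤ (ENNReal.ofReal (ρ ^ (d:ℕ)) * vB) ^ ((1:ℝ)/2) * N ^ ((1:ℝ)/2) := by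
      rw [hUc]
      refine le_trans (LUP.plain_L1 _ f hf.1.aemeasurable) ?_
      rw [Measure.addHaar_ball volume _ hρpos.le, finrank_euclideanSpace_fin, ← hvBdef, ← hNdef]
    have e1 : (ENNReal.ofReal (ρ ^ ((d:ℝ) - 2*s))) ^ ((1:ℝ)/2)
        = M ^ (((d:ℝ)-2*s)/(4*s)) * N ^ (-(((d:ℝ)-2*s)/(4*s))) := by
      rw [← ENNReal.ofReal_rpow_of_pos hρpos, ← ENNReal.rpow_mul, qpow]
      congr 2 <;>
      · field_simp
        try ring
        try exact Or.inl trivial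
    have e2 : (ENNReal.ofReal (ρ ^ (d:ℕ))) ^ ((1:ℝ)/2)
        = M ^ ((d:ℝ)/(4*s)) * N ^ (-((d:ℝ)/(4*s))) := by
      rw [← Real.rpow_natCast ρ d, ← ENNReal.ofReal_rpow_of_pos hρpos, ← ENNReal.rpow_mul, qpow]
      congr 2 <;>
      · field_simp
        try ring
        try exact Or.inl trivial
    have hMadd : M ^ (((d:ℝ)-2*s)/(4*s)) * M ^ ((1:ℝ)/2) = M ^ ((d:ℝ)/(4*s)) := by
      rw [← ENNReal.rpow_add _ _ hM0 hMtop]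
      congr 1
      field_simp
      try ring
      try exact Or.inl trivial
    have hNeq : N ^ (-(((d:ℝ)-2*s)/(4*s))) = N ^ ((1 - (d:ℝ)/(2*s))/2) := by
      congr 1
      field_simp
      try ring
      try exact Or.inl trivial
    have hNadd : N ^ (-((d:ℝ)/(4*s))) * N ^ ((1:ℝ)/2) = N ^ ((1 - (d:ℝ)/(2*s))/2) := by
      rw [← ENNReal.rpow_add _ _ hN0 hN_top]
      congr 1
      field_simp
      try ring
      try exact Or.inl trivial
    have hL : ∫⁻ x, (‖f x‖₊ : ℝ≥0∞) ∂volume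
        ≤ (Ct ^ ((1:ℝ)/2) + vB ^ ((1:ℝ)/2)) *
          (N ^ ((1 - (d:ℝ)/(2*s))/2) * M ^ ((d:ℝ)/(4*s))) := by
      rw [← lintegral_add_compl (fun x => (‖f x‖₊ : ℝ≥0∞)) hUmeas]
      have T1 : (ENNReal.ofReal (ρ ^ ((d:ℝ) - 2*s)) * Ct) ^ ((1:ℝ)/2) * M ^ ((1:ℝ)/2)
          = Ct ^ ((1:ℝ)/2) * (N ^ ((1 - (d:ℝ)/(2*s))/2) * M ^ ((d:ℝ)/(4*s))) := by
        rw [ENNReal.mul_rpow_of_nonneg _ _ (by norm_num : (0:ℝ) ≤ 1/2), e1]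
        calc M ^ (((d:ℝ)-2*s)/(4*s)) * N ^ (-(((d:ℝ)-2*s)/(4*s))) * Ct ^ ((1:ℝ)/2) * M ^ ((1:ℝ)/2)
            = Ct ^ ((1:ℝ)/2) * (N ^ (-(((d:ℝ)-2*s)/(4*s))) *
              (M ^ (((d:ℝ)-2*s)/(4*s)) * M ^ ((1:ℝ)/2))) := by ring
          _ = Ct ^ ((1:ℝ)/2) * (N ^ ((1 - (d:ℝ)/(2*s))/2) * M ^ ((d:ℝ)/(4*s))) := by
              rw [hMadd, hNeq]
      have T2 : (ENNReal.ofReal (ρ ^ (d:ℕ)) * vB) ^ ((1:ℝ)/2) * N ^ ((1:ℝ)/2)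
          = vB ^ ((1:ℝ)/2) * (N ^ ((1 - (d:ℝ)/(2*s))/2) * M ^ ((d:ℝ)/(4*s))) := by
        rw [ENNReal.mul_rpow_of_nonneg _ _ (by norm_num : (0:ℝ) ≤ 1/2), e2]
        calc M ^ ((d:ℝ)/(4*s)) * N ^ (-((d:ℝ)/(4*s))) * vB ^ ((1:ℝ)/2) * N ^ ((1:ℝ)/2)
            = vB ^ ((1:ℝ)/2) * ((N ^ (-((d:ℝ)/(4*s))) * N ^ ((1:ℝ)/2)) * M ^ ((d:ℝ)/(4*s))) := by
              ring
          _ = vB ^ ((1:ℝ)/2) * (N ^ ((1 - (d:ℝ)/(2*s))/2) * M ^ ((d:ℝ)/(4*s))) := by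
              rw [hNadd]
      calc (∫⁻ x in U, (‖f x‖₊ : ℝ≥0∞) ∂volume) + ∫⁻ x in Uᶜ, (‖f x‖₊ : ℝ≥0∞) ∂volume
          ≤ (ENNReal.ofReal (ρ ^ ((d:ℝ) - 2*s)) * Ct) ^ ((1:ℝ)/2) * M ^ ((1:ℝ)/2)
            + (ENNReal.ofReal (ρ ^ (d:ℕ)) * vB) ^ ((1:ℝ)/2) * N ^ ((1:ℝ)/2) :=
            add_le_add htail hball
        _ = (Ct ^ ((1:ℝ)/2) + vB ^ ((1:ℝ)/2)) *
            (N ^ ((1 - (d:ℝ)/(2*s))/2) * M ^ ((d:ℝ)/(4*s))) := by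
            rw [T1, T2, add_mul]
    have hXfin : (Ct ^ ((1:ℝ)/2) + vB ^ ((1:ℝ)/2)) *
        (N ^ ((1 - (d:ℝ)/(2*s))/2) * M ^ ((d:ℝ)/(4*s))) < ∞ := by
      refine ENNReal.mul_lt_top ?_ ?_
      · exact ENNReal.add_lt_top.mpr ⟨ENNReal.rpow_lt_top_of_nonneg (by norm_num) hCt.ne,
          ENNReal.rpow_lt_top_of_nonneg (by norm_num) measure_ball_lt_top.ne⟩
      · exact ENNReal.mul_lt_top (ENNReal.rpow_lt_top_of_nonneg hαpos.le hN_top)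
          (ENNReal.rpow_lt_top_of_nonneg hβpos.le hMtop)
    have hfInt : Integrable f volume := ⟨hf.1, lt_of_le_of_lt hL hXfin⟩
    have hfinal := sqrt_bound f (ENNReal.ofReal c₀ * ((Ct ^ ((1:ℝ)/2) + vB ^ ((1:ℝ)/2)) *
        (N ^ ((1 - (d:ℝ)/(2*s))/2) * M ^ ((d:ℝ)/(4*s)))))
      (fun ξ => le_trans (key f hfInt ξ) (mul_le_mul_right hL _))
    refine le_trans hfinal ?_
    have hDle : ENNReal.ofReal c₀ * (Ct ^ ((1:ℝ)/2) + vB ^ ((1:ℝ)/2)) ≤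
        ENNReal.ofReal (D.toReal + 1) := by
      calc ENNReal.ofReal c₀ * (Ct ^ ((1:ℝ)/2) + vB ^ ((1:ℝ)/2)) ≤ D := by
            rw [hDdef]; exact le_self_add
        _ = ENNReal.ofReal (D.toReal) := (ENNReal.ofReal_toReal hD_top).symm
        _ ≤ ENNReal.ofReal (D.toReal + 1) := ENNReal.ofReal_le_ofReal (by linarith)
    calc ENNReal.ofReal c₀ * ((Ct ^ ((1:ℝ)/2) + vB ^ ((1:ℝ)/2)) *
          (N ^ ((1 - (d:ℝ)/(2*s))/2) * M ^ ((d:ℝ)/(4*s)))) * (volume Sh) ^ ((1:ℝ)/2)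
        = (ENNReal.ofReal c₀ * (Ct ^ ((1:ℝ)/2) + vB ^ ((1:ℝ)/2))) * (volume Sh) ^ ((1:ℝ)/2) *
          N ^ ((1 - (d:ℝ)/(2*s))/2) * M ^ ((d:ℝ)/(4*s)) := by ring
      _ ≤ ENNReal.ofReal (D.toReal + 1) * (volume Sh) ^ ((1:ℝ)/2) *
          N ^ ((1 - (d:ℝ)/(2*s))/2) * M ^ ((d:ℝ)/(4*s)) := by
          exact mul_le_mul_left (mul_le_mul_left (mul_le_mul_left hDle _) _) _
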